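/- arXiv:2605.04990 — 6 statements merged into one kernel-verified Lean document; each statement's English description precedes it below -/
import Mathlib

section
/- For b ≥ 0 and ℓ ∈ ℕ, the string p^{b+ℓ} m^ℓ (reading digits from most significant to least significant, i.e., the vector equals sum_{i=0}^{b+2ℓ-1} M^i d_i where the ℓ least significant digits are m and the remaining b+ℓ digits are p) represents the vector (a, b)^T with a = b(b-1)/2 + 2bℓ + ℓ². -/
/-- The Jordan block `[[1,1],[0,1]]`. -/
def M1 : Matrix (Fin 2) (Fin 2) ℤ := !![1, 1; 0, 1]

/-- The digit `p = (0,1)ᵀ`. -/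
def pd : Fin 2 → ℤ := ![0, 1]

/-- The digit `m = (0,-1)ᵀ`. -/
def md : Fin 2 → ℤ := ![0, -1]

/-- The vector represented by the word `d_{k-1} … d_0`, namely `∑ M^i d_i`. -/
def val1 {k : ℕ} (d : Fin k → (Fin 2 → ℤ)) : Fin 2 → ℤ :=
  ∑ i : Fin k, (M1 ^ (i : ℕ)).mulVec (d i)

/-!
Both digits are vertical vectors `(0, c)ᵀ`, and `M^i (0, c)ᵀ = (i c, c)ᵀ`, so a word of vertical
digits represents `(∑ i c_i, ∑ c_i)ᵀ`. For `p^{b+ℓ} m^ℓ` the second coordinate is `(b + ℓ) - ℓ = b`,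
and the first is `∑_{i < b+ℓ} (ℓ + i) - ∑_{i < ℓ} i`, which Gauss's formula evaluates.
-/

open Finset

lemma M1_pow (n : ℕ) : M1 ^ n = !![1, (n : ℤ); 0, 1] := by
  induction n with
  | zero => simp [Matrix.one_fin_two]
  | succ n ih =>
    rw [pow_succ, ih, M1, Matrix.mul_fin_two]
    simp only [mul_one, mul_zero, add_zero, zero_add, Nat.cast_succ, add_comm]

lemma M1_pow_mulVec_vertical (n : ℕ) (c : ℤ) : (M1 ^ n).mulVec ![0, c] = ![n * c, c] := by
  ext j
  fin_cases j <;> simp [M1_pow, Matrix.mulVec, dotProduct, Fin.sum_univ_two]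

lemma val1_vertical {k : ℕ} (c : Fin k → ℤ) :
    val1 (fun i => ![0, c i]) = ![∑ i : Fin k, ((i : ℕ) : ℤ) * c i, ∑ i, c i] := by
  simp only [val1, M1_pow_mulVec_vertical]
  ext j
  fin_cases j <;> simp [Finset.sum_apply]

lemma sum_range_add_ite_lt_neg {G : Type*} [AddCommGroup G] (f : ℕ → G) (ℓ n : ℕ) :
    ∑ i ∈ range (ℓ + n), (if i < ℓ then -f i else f i)
      = ∑ i ∈ range n, f (ℓ + i) - ∑ i ∈ range ℓ, f i := by
  rw [sum_range_add, sum_congr rfl fun i hi => if_pos (mem_range.mp hi),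
    sum_congr rfl fun i _ => if_neg (Nat.not_lt.mpr (Nat.le_add_right ℓ i)), sum_neg_distrib]
  abel

lemma two_mul_sum_range_intCast (n : ℕ) : 2 * ∑ i ∈ range n, (i : ℤ) = n * (n - 1) := by
  induction n with
  | zero => simp
  | succ n ih =>
    rw [sum_range_succ, mul_add, ih]
    push_cast
    ring

theorem stmt1 (b ℓ : ℕ) :
    val1 (fun i : Fin (b + 2 * ℓ) => if (i : ℕ) < ℓ then md else pd)
      = ![(b : ℤ) * ((b : ℤ) - 1) / 2 + 2 * (b : ℤ) * (ℓ : ℤ) + (ℓ : ℤ) ^ 2, (b : ℤ)] := by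
  have hword : (fun i : Fin (b + 2 * ℓ) => if (i : ℕ) < ℓ then md else pd)
      = fun i : Fin (b + 2 * ℓ) => ![0, if (i : ℕ) < ℓ then -1 else 1] := by
    ext i : 1
    split_ifs <;> rfl
  have hlen : b + 2 * ℓ = ℓ + (b + ℓ) := by ring
  have hweight := sum_range_add_ite_lt_neg (fun i => (i : ℤ)) ℓ (b + ℓ)
  have hcount := sum_range_add_ite_lt_neg (fun _ => (1 : ℤ)) ℓ (b + ℓ)
  have hgauss := two_mul_sum_range_intCast (b + ℓ)
  have hgaussℓ := two_mul_sum_range_intCast ℓ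
  obtain ⟨r, hr⟩ := Int.even_mul_pred_self b
  rw [hword, val1_vertical, Fin.sum_univ_eq_sum_range (fun i => (i : ℤ) * if i < ℓ then -1 else 1),
    Fin.sum_univ_eq_sum_range (fun i => if i < ℓ then (-1 : ℤ) else 1), hlen]
  simp only [mul_ite, mul_neg, mul_one] at hweight ⊢
  rw [hweight, hcount]
  simp only [sum_const, card_range, nsmul_eq_mul, mul_one, Nat.cast_add, sum_add_distrib] at hgauss ⊢
  ext j
  fin_cases j
  · simp only [Fin.zero_eta, Matrix.cons_val_zero]
    rw [show (b : ℤ) * (b - 1) / 2 = r by omega]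
    linarith
  · simp
end

section
/- Let M = J_n(-1) be the n×n Jordan block with eigenvalue -1 and digit set D = {(0,...,0,1)^T, (0,...,0)^T}. Then (M, D) is a full number system: every vector in Z^n can be written as sum_{i=0}^{k-1} M^i d_i with d_i ∈ D. -/
/-- The `n × n` Jordan block with eigenvalue `-1`: `-1` on the diagonal, `1` on the
superdiagonal, `0` elsewhere. -/
def Jneg (n : ℕ) : Matrix (Fin n) (Fin n) ℤ :=
  Matrix.of fun i j => if j = i then -1 else if (j : ℕ) = (i : ℕ) + 1 then 1 else 0

/-- The digit `p = (0, …, 0, 1)ᵀ`. -/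
def pvec (n : ℕ) : Fin n → ℤ := fun i => if (i : ℕ) = n - 1 then 1 else 0

/-- The vector represented by a word `d_{k-1} … d_0`, namely `∑ M^i d_i` with `M = Jneg n`. -/
def valJ (n : ℕ) {k : ℕ} (d : Fin k → (Fin n → ℤ)) : Fin n → ℤ :=
  ∑ i : Fin k, ((Jneg n) ^ (i : ℕ)).mulVec (d i)

/-!
Because `(M + 1) ^ (n - 1 - i) p` is the `i`-th unit vector, `f ↦ f(M) p` maps `ℤ[X]` onto
`ℤⁿ`, and it kills `(X + 1) ^ n` since `M + 1` is the nilpotent shift. So it suffices that every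
integer polynomial is congruent modulo `(X + 1) ^ n` to a sum of distinct powers of `X`; this is
built up one power of `X + 1` at a time.

As `X ≡ -1 [mod X + 1]`, multiplying a sum of powers `≡ c (X + 1) ^ j [mod (X + 1) ^ (j + 1)]`
by `X ^ m` turns `c` into `(-1) ^ m c`. Shifting by even amounts to make supports disjoint, the
attainable `c` form a subgroup of `ℤ`. It contains `1`: at level `0` take `X ^ 0`, and if `P`
attains `1` at level `j`, then for odd `m` beyond its support `(1 + X ^ m) P` is again a sum of
distinct powers and attains `m` at level `j + 1`, because `1 + X ^ m ≡ m (X + 1)` modulo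
`(X + 1) ^ 2`. Two consecutive odd values of `m` generate `1`.
-/

open Polynomial
open scoped Matrix

section CommRing

variable {R : Type*} [CommRing R] {x p c : R} {j : ℕ}

lemma dvd_pow_mul_sub_of_dvd_sub (h : (x + 1) ^ (j + 1) ∣ p - c * (x + 1) ^ j) (m : ℕ) :
    (x + 1) ^ (j + 1) ∣ x ^ m * p - (-1) ^ m * c * (x + 1) ^ j := by
  have hx : x + 1 ∣ x ^ m - (-1) ^ m := by simpa using sub_dvd_pow_sub_pow x (-1) m
  have e : x ^ m * p - (-1) ^ m * c * (x + 1) ^ j =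
      x ^ m * (p - c * (x + 1) ^ j) + (x + 1) ^ j * ((x ^ m - (-1) ^ m) * c) := by ring
  rw [e]
  refine dvd_add (dvd_mul_of_dvd_right h _) ?_
  rw [pow_succ]
  exact mul_dvd_mul_left _ (dvd_mul_of_dvd_left hx _)

lemma sq_dvd_pow_odd_add_one_sub (x : R) (l : ℕ) :
    (x + 1) ^ 2 ∣ x ^ (2 * l + 1) + 1 - (2 * l + 1) * (x + 1) := by
  induction l with
  | zero => simp
  | succ l ih =>
    have e : x ^ (2 * (l + 1) + 1) + 1 - (2 * ↑(l + 1) + 1) * (x + 1) =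
        x ^ 2 * (x ^ (2 * l + 1) + 1 - (2 * l + 1) * (x + 1)) +
          (x + 1) ^ 2 * ((2 * l + 1) * (x - 1) - 1) := by push_cast; ring
    rw [e]
    exact dvd_add (dvd_mul_of_dvd_right ih _) (dvd_mul_right _ _)

lemma dvd_one_add_pow_odd_mul_sub_of_dvd_sub (h : (x + 1) ^ (j + 1) ∣ p - c * (x + 1) ^ j)
    (l : ℕ) :
    (x + 1) ^ (j + 2) ∣ (1 + x ^ (2 * l + 1)) * p - (2 * l + 1) * c * (x + 1) ^ (j + 1) := by
  obtain ⟨q, hq⟩ := h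
  obtain ⟨r, hr⟩ := sq_dvd_pow_odd_add_one_sub x l
  refine ⟨(2 * l + 1) * q + r * c + (x + 1) * r * q, ?_⟩
  rw [add_comm 1, show x ^ (2 * l + 1) + 1 = (2 * l + 1) * (x + 1) + (x + 1) ^ 2 * r by
    rw [← hr]; ring, show p = c * (x + 1) ^ j + (x + 1) ^ (j + 1) * q by rw [← hq]; ring]
  ring

end CommRing

noncomputable def powSum (S : Finset ℕ) : ℤ[X] := ∑ i ∈ S, X ^ i

lemma powSum_union {S T : Finset ℕ} (h : Disjoint S T) :
    powSum (S ∪ T) = powSum S + powSum T :=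
  Finset.sum_union h

lemma powSum_map_addLeftEmbedding (S : Finset ℕ) (k : ℕ) :
    powSum (S.map (addLeftEmbedding k)) = X ^ k * powSum S := by
  simp [powSum, Finset.mul_sum, pow_add]

lemma disjoint_map_addLeftEmbedding_of_subset_range {S : Finset ℕ} {k : ℕ}
    (hS : S ⊆ Finset.range k) (T : Finset ℕ) : Disjoint S (T.map (addLeftEmbedding k)) := by
  rw [Finset.disjoint_left]
  intro a ha ha'
  obtain ⟨b, -, rfl⟩ := Finset.mem_map.1 ha'
  simpa using Finset.mem_range.1 (hS ha)

lemma exists_disjoint_powSum_dvd_sub {T : Finset ℕ} {j : ℕ} {c : ℤ[X]}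
    (hT : (X + 1) ^ (j + 1) ∣ powSum T - c * (X + 1) ^ j) (S : Finset ℕ) :
    ∃ T' : Finset ℕ, Disjoint S T' ∧ (X + 1) ^ (j + 1) ∣ powSum T' - c * (X + 1) ^ j := by
  obtain ⟨k, hk⟩ := S.exists_nat_subset_range
  refine ⟨T.map (addLeftEmbedding (2 * k)),
    disjoint_map_addLeftEmbedding_of_subset_range (hk.trans (by simp; omega)) T, ?_⟩
  simpa [powSum_map_addLeftEmbedding, pow_mul] using dvd_pow_mul_sub_of_dvd_sub hT (2 * k)

def attainableCoeffs (j : ℕ) : AddSubgroup ℤ where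
  carrier := {c | ∃ S : Finset ℕ, (X + 1) ^ (j + 1) ∣ powSum S - (c : ℤ[X]) * (X + 1) ^ j}
  zero_mem' := ⟨∅, by simp [powSum]⟩
  add_mem' := by
    rintro a b ⟨S, hS⟩ ⟨T₀, hT₀⟩
    obtain ⟨T, hST, hT⟩ := exists_disjoint_powSum_dvd_sub hT₀ S
    refine ⟨S ∪ T, ?_⟩
    convert dvd_add hS hT using 1
    rw [powSum_union hST]; push_cast; ring
  neg_mem' := by
    rintro a ⟨S, hS⟩
    refine ⟨S.map (addLeftEmbedding 1), ?_⟩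
    simpa [powSum_map_addLeftEmbedding] using dvd_pow_mul_sub_of_dvd_sub hS 1

lemma odd_mul_mem_attainableCoeffs_succ {S : Finset ℕ} {j : ℕ} {c : ℤ}
    (hS : (X + 1) ^ (j + 1) ∣ powSum S - (c : ℤ[X]) * (X + 1) ^ j) {l : ℕ}
    (hl : S ⊆ Finset.range (2 * l + 1)) : (2 * l + 1) * c ∈ attainableCoeffs (j + 1) := by
  refine ⟨S ∪ S.map (addLeftEmbedding (2 * l + 1)), ?_⟩
  rw [powSum_union (disjoint_map_addLeftEmbedding_of_subset_range hl S),
    powSum_map_addLeftEmbedding]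
  convert dvd_one_add_pow_odd_mul_sub_of_dvd_sub hS l using 2
  · ring
  · push_cast; ring

lemma one_mem_attainableCoeffs (j : ℕ) : (1 : ℤ) ∈ attainableCoeffs j := by
  induction j with
  | zero => exact ⟨{0}, by simp [powSum]⟩
  | succ j ih =>
    obtain ⟨S, hS⟩ := ih
    obtain ⟨k, hk⟩ := S.exists_nat_subset_range
    have h₁ := odd_mul_mem_attainableCoeffs_succ hS (l := k) (hk.trans (by simp; omega))
    have h₂ := odd_mul_mem_attainableCoeffs_succ hS (l := k + 1) (hk.trans (by simp; omega))
    -- `(k + 1) (2k + 1) - k (2k + 3) = 1`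
    convert sub_mem (zsmul_mem h₁ (k + 1)) (zsmul_mem h₂ k) using 1
    push_cast; ring

lemma mem_attainableCoeffs (j : ℕ) (c : ℤ) : c ∈ attainableCoeffs j := by
  simpa using zsmul_mem (one_mem_attainableCoeffs j) c

theorem exists_powSum_dvd_sub (f : ℤ[X]) (j : ℕ) :
    ∃ S : Finset ℕ, (X + 1) ^ j ∣ f - powSum S := by
  induction j with
  | zero => exact ⟨∅, by simp⟩
  | succ j ih =>
    obtain ⟨S, g, hg⟩ := ih
    set c := g.eval (-1)
    obtain ⟨T₀, hT₀⟩ := mem_attainableCoeffs j c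
    obtain ⟨T, hST, hT⟩ := exists_disjoint_powSum_dvd_sub hT₀ S
    have hg₁ : X + 1 ∣ g - (c : ℤ[X]) := by
      rw [← C_eq_intCast, Int.cast_id]
      simpa only [C_neg, C_1, sub_neg_eq_add] using
      X_sub_C_dvd_sub_C_eval (a := (-1 : ℤ)) (p := g)
    refine ⟨S ∪ T, ?_⟩
    have e : f - powSum (S ∪ T) =
        (X + 1) ^ j * (g - (c : ℤ[X])) - (powSum T - (c : ℤ[X]) * (X + 1) ^ j) := by
      rw [powSum_union hST, mul_sub, ← hg]; ring
    rw [e]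
    refine dvd_sub ?_ hT
    rw [pow_succ]
    exact mul_dvd_mul_left _ hg₁

section Jneg

variable {n : ℕ}

lemma Jneg_add_one_mulVec_apply (v : Fin n → ℤ) (i : Fin n) :
    ((Jneg n + 1) *ᵥ v) i = if h : (i : ℕ) + 1 < n then v ⟨i + 1, h⟩ else 0 := by
  have hshift : Jneg n + 1 = Matrix.of fun i j : Fin n => if (j : ℕ) = i + 1 then 1 else 0 := by
    ext i j
    simp only [Jneg, Matrix.add_apply, Matrix.one_apply, Matrix.of_apply]
    split_ifs <;> simp_all
  rw [hshift]
  split_ifs with h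
  · have hj (j : Fin n) : (j : ℕ) = i + 1 ↔ j = ⟨i + 1, h⟩ := by simp [Fin.ext_iff]
    simp [Matrix.mulVec, dotProduct, hj]
  · simp only [Matrix.mulVec, dotProduct, Matrix.of_apply, ite_mul, one_mul, zero_mul]
    exact Finset.sum_eq_zero fun j _ => if_neg (by have := j.isLt; omega)

lemma Jneg_add_one_pow_mulVec_apply (k : ℕ) (v : Fin n → ℤ) (i : Fin n) :
    ((Jneg n + 1) ^ k *ᵥ v) i = if h : (i : ℕ) + k < n then v ⟨i + k, h⟩ else 0 := by
  induction k generalizing v with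
  | zero => simp
  | succ k ih =>
    rw [pow_succ, ← Matrix.mulVec_mulVec, ih]
    simp only [Jneg_add_one_mulVec_apply]
    split_ifs <;> first | omega | simp [add_assoc]

lemma Jneg_add_one_pow_eq_zero : (Jneg n + 1) ^ n = 0 :=
  Matrix.mulVec_injective <| funext fun v => funext fun i => by
    simp [Jneg_add_one_pow_mulVec_apply]

lemma Jneg_add_one_pow_mulVec_pvec (i : Fin n) :
    (Jneg n + 1) ^ (n - 1 - i) *ᵥ pvec n = Pi.single i 1 := by
  funext i'
  rw [Jneg_add_one_pow_mulVec_apply, Pi.single_apply]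
  simp only [pvec, Fin.ext_iff]
  split_ifs <;> omega

lemma exists_aeval_Jneg_mulVec_pvec (x : Fin n → ℤ) :
    ∃ f : ℤ[X], aeval (Jneg n) f *ᵥ pvec n = x := by
  refine ⟨∑ i, x i • (X + 1) ^ (n - 1 - i), ?_⟩
  simp only [map_sum, map_zsmul, map_pow, map_add, aeval_X, map_one, Matrix.sum_mulVec,
    Matrix.smul_mulVec, Jneg_add_one_pow_mulVec_pvec]
  funext j
  simp [Finset.sum_apply, Pi.single_apply]

lemma aeval_Jneg_eq_of_dvd_sub {f g : ℤ[X]} (h : (X + 1) ^ n ∣ f - g) :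
    aeval (Jneg n) f = aeval (Jneg n) g := by
  obtain ⟨q, hq⟩ := h
  rw [← sub_eq_zero, ← map_sub, hq, map_mul, map_pow, map_add, aeval_X, map_one,
    Jneg_add_one_pow_eq_zero, zero_mul]

lemma valJ_ite_mem {k : ℕ} {S : Finset ℕ} (hS : S ⊆ Finset.range k) :
    valJ n (fun i : Fin k => if (i : ℕ) ∈ S then pvec n else 0) =
      aeval (Jneg n) (powSum S) *ᵥ pvec n := by
  simp only [valJ, powSum, map_sum, map_pow, aeval_X, Matrix.sum_mulVec, apply_ite,
    Matrix.mulVec_zero]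
  rw [Fin.sum_univ_eq_sum_range (fun i => if i ∈ S then Jneg n ^ i *ᵥ pvec n else 0),
    Finset.sum_ite_mem, Finset.inter_eq_right.2 hS]

end Jneg

theorem stmt9 (n : ℕ) (x : Fin n → ℤ) :
    ∃ (k : ℕ) (d : Fin k → (Fin n → ℤ)),
      (∀ i, d i = pvec n ∨ d i = 0) ∧ valJ n d = x := by
  obtain ⟨f, rfl⟩ := exists_aeval_Jneg_mulVec_pvec x
  obtain ⟨S, hS⟩ := exists_powSum_dvd_sub f n
  obtain ⟨k, hk⟩ := S.exists_nat_subset_range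
  refine ⟨k, fun i => if (i : ℕ) ∈ S then pvec n else 0, fun i => ?_, ?_⟩
  · by_cases h : (i : ℕ) ∈ S <;> simp [h]
  · rw [valJ_ite_mem hk, aeval_Jneg_eq_of_dvd_sub hS]
end

section
/- Let M = J_n(-1), digits p = (0,...,0,1)^T and z the zero vector, and 1 ≤ j < n. If there exists a word w over {p, z} representing a vector of the form (ω_1, ..., ω_j, 1, 0, ..., 0)^T (with n-j-1 trailing zeros), then there exists a word w' over {p, z} representing a vector of the form (ω'_1, ..., ω'_{j-1}, 1, 0, ..., 0)^T (with n-j trailing zeros). -/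
lemma Jneg_mulVec (n : ℕ) (u : Fin n → ℤ) (t : Fin n) :
    (Jneg n).mulVec u t = -u t + (if h : (t:ℕ)+1 < n then u ⟨(t:ℕ)+1, h⟩ else 0) := by
  unfold Matrix.mulVec dotProduct Jneg
  simp only [Matrix.of_apply]
  have hsplit : ∀ s : Fin n,
      (if s = t then (-1:ℤ) else if (s:ℕ) = (t:ℕ) + 1 then 1 else 0) * u s
      = (if s = t then -u s else 0) + (if (s:ℕ) = (t:ℕ)+1 then u s else 0) := by
    intro s
    by_cases h1 : s = t
    · subst h1
      simp [Nat.succ_ne_self]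
    · by_cases h2 : (s:ℕ) = (t:ℕ)+1 <;> simp [h1, h2]
  rw [Finset.sum_congr rfl (fun s _ => hsplit s), Finset.sum_add_distrib]
  congr 1
  · simp
  · by_cases h : (t:ℕ)+1 < n
    · rw [dif_pos h]
      rw [Finset.sum_eq_single (⟨(t:ℕ)+1, h⟩ : Fin n)]
      · simp
      · intro s _ hs
        have : ¬ ((s:ℕ) = (t:ℕ)+1) := by
          intro hc
          apply hs
          exact Fin.ext hc
        simp [this]
      · simp
    · rw [dif_neg h]
      apply Finset.sum_eq_zero
      intro s _
      have : ¬ ((s:ℕ) = (t:ℕ)+1) := by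
        have := s.isLt
        omega
      simp [this]

lemma Jpow (n i : ℕ) : ∀ t : Fin n,
    ((Jneg n) ^ i).mulVec (pvec n) t
      = (-1)^(i + (n - 1 - (t:ℕ))) * (Nat.choose i (n - 1 - (t:ℕ)) : ℤ) := by
  induction i with
  | zero =>
    intro t
    have ht := t.isLt
    rw [pow_zero, Matrix.one_mulVec]
    by_cases h : (t:ℕ) = n - 1
    · have : n - 1 - (t:ℕ) = 0 := by omega
      simp [pvec, h, this]
    · have hm : 0 < n - 1 - (t:ℕ) := by omega
      rw [Nat.choose_eq_zero_of_lt (by omega)]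
      simp [pvec, h]
  | succ i ih =>
    intro t
    have ht := t.isLt
    rw [pow_succ', ← Matrix.mulVec_mulVec, Jneg_mulVec, ih t]
    by_cases h : (t:ℕ)+1 < n
    · rw [dif_pos h, ih ⟨(t:ℕ)+1, h⟩]
      simp only []
      have hm : 0 < n - 1 - (t:ℕ) := by omega
      set m := n - 1 - (t:ℕ) with hm_def
      have h2 : n - 1 - ((t:ℕ)+1) = m - 1 := by omega
      rw [h2]
      have h3 : m = (m-1)+1 := by omega
      rw [h3, Nat.choose_succ_succ]
      have h4 : i + ((m-1)+1) = (i + (m-1)) + 1 := by omega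
      have h5 : i + 1 + ((m-1)+1) = (i + (m-1)) + 2 := by omega
      rw [h4, h5]
      push_cast
      ring
    · rw [dif_neg h]
      have hm : n - 1 - (t:ℕ) = 0 := by omega
      rw [hm]
      simp [pow_succ]


/-- sum of signed binomials over a finset -/
def gfun (S : Finset ℕ) (m : ℕ) : ℤ := ∑ i ∈ S, (-1)^i * (i.choose m : ℤ)

def shiftS (a : ℕ) (S : Finset ℕ) : Finset ℕ :=
  S.map ⟨fun i => a + i, add_right_injective a⟩

lemma shiftS_zero (S : Finset ℕ) : shiftS 0 S = S := by
  ext i; simp [shiftS]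

lemma mem_shiftS {a : ℕ} {S : Finset ℕ} {i : ℕ} :
    i ∈ shiftS a S ↔ ∃ j ∈ S, a + j = i := by
  simp [shiftS]

lemma gfun_shiftS (a : ℕ) (S : Finset ℕ) (m : ℕ) :
    gfun (shiftS a S) m = ∑ i ∈ S, (-1)^(a+i) * ((a+i).choose m : ℤ) := by
  simp [gfun, shiftS, Finset.sum_map]

lemma gshift_succ_zero (S : Finset ℕ) (a : ℕ) :
    gfun (shiftS (a+1) S) 0 = - gfun (shiftS a S) 0 := by
  rw [gfun_shiftS, gfun_shiftS, ← Finset.sum_neg_distrib]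
  apply Finset.sum_congr rfl
  intro i _
  have : a + 1 + i = (a + i) + 1 := by omega
  rw [this]
  rw [pow_succ]
  simp

lemma gshift_succ (S : Finset ℕ) (a ν : ℕ) :
    gfun (shiftS (a+1) S) (ν+1) = -(gfun (shiftS a S) ν + gfun (shiftS a S) (ν+1)) := by
  rw [gfun_shiftS, gfun_shiftS, gfun_shiftS, ← Finset.sum_add_distrib, ← Finset.sum_neg_distrib]
  apply Finset.sum_congr rfl
  intro i _
  have h1 : a + 1 + i = (a + i) + 1 := by omega
  rw [h1, Nat.choose_succ_succ]
  push_cast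
  rw [pow_succ]
  ring

lemma gmap2 (S : Finset ℕ) (m : ℕ) (h : ∀ μ, μ < m → gfun S μ = 0) (a : ℕ) :
    (∀ μ, μ < m → gfun (shiftS a S) μ = 0) ∧
      gfun (shiftS a S) m = (-1)^a * gfun S m ∧
      gfun (shiftS a S) (m+1) = (-1)^a * (gfun S (m+1) + a * gfun S m) := by
  induction a with
  | zero =>
    refine ⟨?_, ?_, ?_⟩ <;> simp [shiftS_zero]
    exact h
  | succ a ih =>
    obtain ⟨ih0, ih1, ih2⟩ := ih
    refine ⟨?_, ?_, ?_⟩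
    · intro μ hμ
      match μ with
      | 0 => rw [gshift_succ_zero, ih0 0 hμ]; ring
      | ν+1 =>
        rw [gshift_succ, ih0 ν (by omega), ih0 (ν+1) hμ]; ring
    · match m with
      | 0 => rw [gshift_succ_zero, ih1]; ring
      | ν+1 =>
        rw [gshift_succ, ih0 ν (by omega), ih1, pow_succ]; ring
    · rw [gshift_succ, ih1, ih2, pow_succ]; push_cast; ring

lemma gfun_union (S T : Finset ℕ) (hd : Disjoint S T) (m : ℕ) :
    gfun (S ∪ T) m = gfun S m + gfun T m := by
  simp [gfun, Finset.sum_union hd]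

lemma key : ∀ m : ℕ, ∃ S : Finset ℕ,
    (∀ μ, μ < m → gfun S μ = 0) ∧ gfun S m = (-1)^m := by
  intro m
  induction m with
  | zero =>
    exact ⟨{0}, by intro μ h; omega, by simp [gfun]⟩
  | succ m ih =>
    obtain ⟨S, h0, h1⟩ := ih
    set b := S.sup id + 1 with hb_def
    have hb : ∀ i ∈ S, i < b := by
      intro i hi
      have : i ≤ S.sup id := Finset.le_sup (f := id) hi
      omega
    -- A := S ∪ shiftS (2b+1) S
    set A := S ∪ shiftS (2*b+1) S with hA_def
    set B := S ∪ shiftS (4*b+1) S with hB_def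
    have hdA : Disjoint S (shiftS (2*b+1) S) := by
      rw [Finset.disjoint_left]
      intro i hi hi'
      obtain ⟨j, hj, hji⟩ := mem_shiftS.1 hi'
      have := hb i hi
      omega
    have hdB : Disjoint S (shiftS (4*b+1) S) := by
      rw [Finset.disjoint_left]
      intro i hi hi'
      obtain ⟨j, hj, hji⟩ := mem_shiftS.1 hi'
      have := hb i hi
      omega
    have hAbound : ∀ i ∈ A, i < 3*b+1 := by
      intro i hi
      rcases Finset.mem_union.1 hi with hi | hi
      · have := hb i hi; omega
      · obtain ⟨j, hj, hji⟩ := mem_shiftS.1 hi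
        have := hb j hj; omega
    have hBbound : ∀ i ∈ B, i < 5*b+1 := by
      intro i hi
      rcases Finset.mem_union.1 hi with hi | hi
      · have := hb i hi; omega
      · obtain ⟨j, hj, hji⟩ := mem_shiftS.1 hi
        have := hb j hj; omega
    have neg_odd : ∀ c : ℕ, Odd c → ((-1:ℤ))^c = -1 := fun c hc => hc.neg_one_pow
    -- g A values
    have gA0 : ∀ μ, μ < m+1 → gfun A μ = 0 := by
      intro μ hμ
      rcases Nat.lt_or_ge μ m with hm | hm
      · rw [hA_def, gfun_union _ _ hdA, h0 μ hm, (gmap2 S m h0 (2*b+1)).1 μ hm]; ring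
      · have hμm : μ = m := by omega
        rw [hμm]
        rw [hA_def, gfun_union _ _ hdA, (gmap2 S m h0 (2*b+1)).2.1,
          neg_odd _ ⟨b, by ring⟩]
        ring
    have gB0 : ∀ μ, μ < m+1 → gfun B μ = 0 := by
      intro μ hμ
      rcases Nat.lt_or_ge μ m with hm | hm
      · rw [hB_def, gfun_union _ _ hdB, h0 μ hm, (gmap2 S m h0 (4*b+1)).1 μ hm]; ring
      · have hμm : μ = m := by omega
        rw [hμm]
        rw [hB_def, gfun_union _ _ hdB, (gmap2 S m h0 (4*b+1)).2.1,
          neg_odd _ ⟨2*b, by ring⟩]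
        ring
    have e1 : ((-1:ℤ))^(2*b+1) = -1 := Odd.neg_one_pow ⟨b, by ring⟩
    have e2 : ((-1:ℤ))^(4*b+1) = -1 := Odd.neg_one_pow ⟨2*b, by ring⟩
    have e3 : ((-1:ℤ))^(8*b+3) = -1 := Odd.neg_one_pow ⟨4*b+1, by ring⟩
    have e4 : ((-1:ℤ))^(4*b+2) = 1 := Even.neg_one_pow ⟨2*b+1, by ring⟩
    have gA1 : gfun A (m+1) = (2*(b:ℤ)+1) * (-1)^(m+1) := by
      rw [hA_def, gfun_union _ _ hdA, (gmap2 S m h0 (2*b+1)).2.2, e1, h1]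
      push_cast
      rw [pow_succ]
      ring
    have gB1 : gfun B (m+1) = (4*(b:ℤ)+1) * (-1)^(m+1) := by
      rw [hB_def, gfun_union _ _ hdB, (gmap2 S m h0 (4*b+1)).2.2, e2, h1]
      push_cast
      rw [pow_succ]
      ring
    have hd1 : Disjoint A (shiftS (4*b+2) A) := by
      rw [Finset.disjoint_left]
      intro i hi hi'
      obtain ⟨j, hj, hji⟩ := mem_shiftS.1 hi'
      have := hAbound i hi
      omega
    have hd2 : Disjoint (A ∪ shiftS (4*b+2) A) (shiftS (8*b+3) B) := by
      rw [Finset.disjoint_left]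
      intro i hi hi'
      obtain ⟨j, hj, hji⟩ := mem_shiftS.1 hi'
      rcases Finset.mem_union.1 hi with hi | hi
      · have := hAbound i hi; omega
      · obtain ⟨j', hj', hji'⟩ := mem_shiftS.1 hi
        have := hAbound j' hj'
        omega
    refine ⟨(A ∪ shiftS (4*b+2) A) ∪ shiftS (8*b+3) B, ?_, ?_⟩
    · intro μ hμ
      rw [gfun_union _ _ hd2, gfun_union _ _ hd1,
        gA0 μ hμ, (gmap2 A (m+1) gA0 (4*b+2)).1 μ hμ,
        (gmap2 B (m+1) gB0 (8*b+3)).1 μ hμ]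
      ring
    · rw [gfun_union _ _ hd2, gfun_union _ _ hd1, gA1,
        (gmap2 A (m+1) gA0 (4*b+2)).2.1, gA1,
        (gmap2 B (m+1) gB0 (8*b+3)).2.1, gB1, e3, e4]
      ring

lemma valJ_formula (n K : ℕ) (S : Finset ℕ) (hS : ∀ i ∈ S, i < K) (t : Fin n) :
    valJ n (fun i : Fin K => if (i:ℕ) ∈ S then pvec n else 0) t
      = (-1)^(n-1-(t:ℕ)) * gfun S (n-1-(t:ℕ)) := by
  unfold valJ
  rw [Finset.sum_apply]
  have hterm : ∀ i : Fin K,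
      ((Jneg n ^ (i:ℕ)).mulVec (if (i:ℕ) ∈ S then pvec n else 0)) t
      = if (i:ℕ) ∈ S then (-1:ℤ)^((i:ℕ) + (n-1-(t:ℕ))) * (Nat.choose (i:ℕ) (n-1-(t:ℕ)) : ℤ) else 0 := by
    intro i
    by_cases h : (i:ℕ) ∈ S
    · rw [if_pos h, if_pos h, Jpow]
    · rw [if_neg h, if_neg h, Matrix.mulVec_zero]
      rfl
  rw [Finset.sum_congr rfl (fun i _ => hterm i)]
  rw [Fin.sum_univ_eq_sum_range
    (fun i => if i ∈ S then (-1:ℤ)^(i + (n-1-(t:ℕ))) * (Nat.choose i (n-1-(t:ℕ)) : ℤ) else 0)]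
  rw [← Finset.sum_filter]
  have hfil : (Finset.range K).filter (· ∈ S) = S := by
    ext x
    simp only [Finset.mem_filter, Finset.mem_range]
    constructor
    · exact fun h => h.2
    · exact fun h => ⟨hS x h, h⟩
  rw [hfil, gfun, Finset.mul_sum]
  apply Finset.sum_congr rfl
  intro i _
  rw [pow_add]
  ring

theorem stmt10 (n j : ℕ) (hj1 : 1 ≤ j) (hjn : j < n)
    {k : ℕ} (w : Fin k → (Fin n → ℤ)) (hw : ∀ i, w i = pvec n ∨ w i = 0)
    (h1 : valJ n w ⟨j, hjn⟩ = 1)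
    (h2 : ∀ i : Fin n, j < (i : ℕ) → valJ n w i = 0) :
    ∃ (k' : ℕ) (w' : Fin k' → (Fin n → ℤ)),
      (∀ i, w' i = pvec n ∨ w' i = 0) ∧
      valJ n w' ⟨j - 1, by omega⟩ = 1 ∧
      ∀ i : Fin n, j ≤ (i : ℕ) → valJ n w' i = 0 := by
  obtain ⟨S, hS0, hS1⟩ := key (n - j)
  set K := S.sup id + 1 with hK_def
  have hS : ∀ i ∈ S, i < K := by
    intro i hi
    have : i ≤ S.sup id := Finset.le_sup (f := id) hi
    omega
  refine ⟨K, fun i => if (i:ℕ) ∈ S then pvec n else 0, ?_, ?_, ?_⟩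
  · intro i
    by_cases h : (i:ℕ) ∈ S
    · exact Or.inl (if_pos h)
    · exact Or.inr (if_neg h)
  · rw [valJ_formula n K S hS]
    have hm : n - 1 - ((⟨j - 1, by omega⟩ : Fin n) : ℕ) = n - j := by
      simp only []
      omega
    rw [hm, hS1, ← pow_add]
    exact Even.neg_one_pow ⟨n - j, rfl⟩
  · intro i hi
    rw [valJ_formula n K S hS]
    rw [hS0 (n - 1 - (i:ℕ)) (by have := i.isLt; omega)]
    ring
end

section
/- Let M be an n×n integer matrix and D a finite digit set containing a word z ∈ D* of odd length representing the zero vector. Fix j ∈ {1,...,n}. Suppose there exist words t, u ∈ D* representing vectors (τ_1,...,τ_{j-1}, T, 0,...,0)^T and (υ_1,...,υ_{j-1}, U, 0,...,0)^T with gcd(T, U) = 1, where M = J_n(-1). Then for every V ∈ Z there exists a word v ∈ D* representing a vector of the form (ν_1,...,ν_{j-1}, V, 0,...,0)^T. -/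
/-!
On vectors supported on the coordinates `≤ i`, the Jordan block `J_n(-1)` is upper triangular
with `-1` on the diagonal, so concatenating words `v w` with `v` of length `k` adds
`(-1)^k` times the `i`-th entry of `w` to that of `v`, and keeps the support. Padding with the
odd zero word fixes the parity of `k`, so the achievable `i`-th entries form a subgroup of `ℤ`;
it contains the coprime `T` and `U`, hence `1` and every `V`.
-/

open Matrix

lemma Jneg_mulVec_apply_of_le {n : ℕ} {i k : Fin n} {x : Fin n → ℤ}
    (hx : ∀ l, i < l → x l = 0) (hik : i ≤ k) : (Jneg n *ᵥ x) k = -x k := by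
  rw [mulVec, dotProduct, Finset.sum_eq_single k]
  · simp [Jneg]
  · intro l _ hlk
    by_cases hl : (l : ℕ) = k + 1
    · simp [hx l (by rw [Fin.lt_def]; omega)]
    · simp [Jneg, hlk, hl]
  · simp

lemma Jneg_pow_mulVec_apply_of_le {n : ℕ} {i k : Fin n} {x : Fin n → ℤ}
    (hx : ∀ l, i < l → x l = 0) (m : ℕ) (hik : i ≤ k) :
    (Jneg n ^ m *ᵥ x) k = (-1) ^ m * x k := by
  induction m generalizing k with
  | zero => simp
  | succ m ih =>
    have hsupp : ∀ l, i < l → (Jneg n ^ m *ᵥ x) l = 0 := fun l hl => by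
      rw [ih hl.le, hx l hl, mul_zero]
    rw [pow_succ', ← mulVec_mulVec, Jneg_mulVec_apply_of_le hsupp hik, ih hik, pow_succ]
    ring

lemma valJ_append (n : ℕ) {m k : ℕ} (v : Fin m → Fin n → ℤ) (w : Fin k → Fin n → ℤ) :
    valJ n (Fin.append v w) = valJ n v + Jneg n ^ m *ᵥ valJ n w := by
  rw [valJ, Fin.sum_univ_add]
  congr 1
  · simp [valJ]
  · have hterm : ∀ l : Fin k,
        Jneg n ^ (Fin.natAdd m l : ℕ) *ᵥ Fin.append v w (Fin.natAdd m l)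
          = (Jneg n ^ m).mulVecLin (Jneg n ^ (l : ℕ) *ᵥ w l) := fun l => by
      simp [pow_add, ← mulVec_mulVec]
    rw [Finset.sum_congr rfl fun l _ => hterm l, ← map_sum, valJ, mulVecLin_apply]

section LeadingEntry

variable {n : ℕ} (D : Finset (Fin n → ℤ)) (i : Fin n)

-- Coordinates are 0-indexed: the paper's coordinate `j` is `i = j - 1`.
def IsLeadingWord {k : ℕ} (v : Fin k → Fin n → ℤ) (c : ℤ) : Prop :=
  (∀ l, v l ∈ D) ∧ valJ n v i = c ∧ ∀ l, i < l → valJ n v l = 0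

variable {D i}

lemma IsLeadingWord.append {m k : ℕ} {v : Fin m → Fin n → ℤ} {w : Fin k → Fin n → ℤ}
    {c c' : ℤ} (hv : IsLeadingWord D i v c) (hw : IsLeadingWord D i w c') :
    IsLeadingWord D i (Fin.append v w) (c + (-1) ^ m * c') := by
  obtain ⟨hvD, hvi, hv0⟩ := hv
  obtain ⟨hwD, hwi, hw0⟩ := hw
  refine ⟨Fin.addCases (by simpa using hvD) (by simpa using hwD), ?_, fun l hl => ?_⟩
  · rw [valJ_append, Pi.add_apply, Jneg_pow_mulVec_apply_of_le hw0 m le_rfl, hvi, hwi]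
  · rw [valJ_append, Pi.add_apply, Jneg_pow_mulVec_apply_of_le hw0 m hl.le, hv0 l hl,
      hw0 l hl, mul_zero, add_zero]

lemma isLeadingWord_zero_of_valJ_eq_zero {k : ℕ} {z : Fin k → Fin n → ℤ} (hzD : ∀ l, z l ∈ D)
    (hz0 : valJ n z = 0) : IsLeadingWord D i z 0 :=
  ⟨hzD, by simp [hz0], by simp [hz0]⟩

variable (D i)

def leadingEntries
    (hz : ∃ (k : ℕ) (z : Fin k → Fin n → ℤ), (∀ l, z l ∈ D) ∧ Odd k ∧ valJ n z = 0) :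
    AddSubgroup ℤ where
  carrier := {c | ∃ (k : ℕ) (v : Fin k → Fin n → ℤ), IsLeadingWord D i v c}
  zero_mem' := ⟨0, Fin.elim0, fun l => l.elim0, by simp [valJ], by simp [valJ]⟩
  add_mem' := by
    obtain ⟨kz, z, hzD, hzodd, hz0⟩ := hz
    have hz := isLeadingWord_zero_of_valJ_eq_zero (i := i) hzD hz0
    rintro c c' ⟨k, v, hv⟩ ⟨k', w, hw⟩
    rcases Nat.even_or_odd k with hk | hk
    · exact ⟨_, _, by simpa [hk.neg_one_pow] using hv.append hw⟩
    · have hpad := (hv.append hz).append hw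
      simp only [mul_zero, add_zero, (hk.add_odd hzodd).neg_one_pow, one_mul] at hpad
      exact ⟨_, _, hpad⟩
  neg_mem' := by
    obtain ⟨kz, z, hzD, hzodd, hz0⟩ := hz
    have hz := isLeadingWord_zero_of_valJ_eq_zero (i := i) hzD hz0
    rintro c ⟨k, v, hv⟩
    exact ⟨_, _, by simpa [hzodd.neg_one_pow] using hz.append hv⟩

end LeadingEntry

lemma AddSubgroup.mem_of_isCoprime {H : AddSubgroup ℤ} {a b : ℤ} (hab : IsCoprime a b)
    (ha : a ∈ H) (hb : b ∈ H) (c : ℤ) : c ∈ H := by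
  obtain ⟨x, y, hxy⟩ := hab
  have h1 : (1 : ℤ) ∈ H := hxy ▸ H.add_mem (H.zsmul_mem ha x) (H.zsmul_mem hb y)
  simpa using H.zsmul_mem h1 c

theorem stmt11 (n : ℕ) (D : Finset (Fin n → ℤ)) (j : ℕ) (hj1 : 1 ≤ j) (hjn : j ≤ n)
    (hz : ∃ (k : ℕ) (z : Fin k → (Fin n → ℤ)),
        (∀ i, z i ∈ D) ∧ Odd k ∧ valJ n z = 0)
    (T U : ℤ) (hTU : Int.gcd T U = 1)
    (ht : ∃ (k : ℕ) (t : Fin k → (Fin n → ℤ)),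
        (∀ i, t i ∈ D) ∧ valJ n t ⟨j - 1, by omega⟩ = T ∧
        ∀ i : Fin n, j ≤ (i : ℕ) → valJ n t i = 0)
    (hu : ∃ (k : ℕ) (u : Fin k → (Fin n → ℤ)),
        (∀ i, u i ∈ D) ∧ valJ n u ⟨j - 1, by omega⟩ = U ∧
        ∀ i : Fin n, j ≤ (i : ℕ) → valJ n u i = 0)
    (V : ℤ) :
    ∃ (k : ℕ) (v : Fin k → (Fin n → ℤ)),
      (∀ i, v i ∈ D) ∧ valJ n v ⟨j - 1, by omega⟩ = V ∧
      ∀ i : Fin n, j ≤ (i : ℕ) → valJ n v i = 0 := by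
  have hlt : ∀ l : Fin n, j ≤ (l : ℕ) ↔ (⟨j - 1, by omega⟩ : Fin n) < l := fun l => by
    change j ≤ (l : ℕ) ↔ j - 1 < (l : ℕ); omega
  simp only [hlt] at ht hu ⊢
  exact AddSubgroup.mem_of_isCoprime (H := leadingEntries D _ hz)
    (Int.isCoprime_iff_gcd_eq_one.mpr hTU) ht hu V
end

section
/- In base M = [[-1,1],[0,-1]] with digits p = (0,1)^T, z = (0,0)^T: for α, β ∈ ℕ, the word (pz)^α (zp)^β (read left to right from most significant to least significant digit) represents the vector (a, b)^T with b = β - α and a = α² + 2αβ - β² + β. -/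
/-- The Jordan block `[[-1,1],[0,-1]]`. -/
def M2 : Matrix (Fin 2) (Fin 2) ℤ := !![-1, 1; 0, -1]
/-- The zero digit `z = (0,0)ᵀ`. -/
def zd : Fin 2 → ℤ := ![0, 0]
/-- The vector represented by the word `d_{k-1} … d_0`, namely `∑ M^i d_i`. -/
def val2 {k : ℕ} (d : Fin k → (Fin 2 → ℤ)) : Fin 2 → ℤ :=
  ∑ i : Fin k, (M2 ^ (i : ℕ)).mulVec (d i)
/-- The word `(pz)^α (zp)^β`, read with `d_{k-1}` leftmost:
the `2β` least significant digits alternate `… z p z p` (so `p` at even positions),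
and the `2α` most significant digits alternate `p z p z …` (so `p` at odd offsets). -/
def wordA (α β : ℕ) : Fin (2 * α + 2 * β) → (Fin 2 → ℤ) := fun i =>
  if (i : ℕ) < 2 * β then (if Even (i : ℕ) then pd else zd)
  else (if Even ((i : ℕ) - 2 * β) then zd else pd)

/-! Since `M2 = -1 + N` with `N² = 0`, the digit `p` at position `n` contributes
`M2 ^ n *ᵥ p = (-1) ^ n • (-n, 1)`: this is `(-2k, 1)` at an even position `2k` and
`(2k + 1, -1)` at an odd position `2k + 1`. The word has its `p`s at the even positions
below `2β` and at the odd positions `2(β + k) + 1`, `k < α`, above; the two blocks sum to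
`(β - β², β)` and `(α² + 2αβ, -α)`. -/

open Finset Matrix

theorem Finset.sum_range_two_mul {A : Type*} [AddCommMonoid A] (f : ℕ → A) (m : ℕ) :
    ∑ i ∈ range (2 * m), f i = ∑ k ∈ range m, (f (2 * k) + f (2 * k + 1)) := by
  induction m with
  | zero => simp
  | succ m ih => rw [mul_add, mul_one, sum_range_succ, sum_range_succ, sum_range_succ, ih, add_assoc]

theorem M2_pow (n : ℕ) : M2 ^ n = !![(-1) ^ n, (n : ℤ) * (-1) ^ (n + 1); 0, (-1) ^ n] := by
  induction n with
  | zero => simp [one_fin_two]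
  | succ n ih =>
    rw [pow_succ, ih, M2, mul_fin_two]
    ext i j
    fin_cases i <;> fin_cases j <;> simp [pow_succ]
    ring

theorem M2_pow_mulVec_pd (n : ℕ) : M2 ^ n *ᵥ pd = ![(n : ℤ) * (-1) ^ (n + 1), (-1) ^ n] := by
  ext i
  fin_cases i <;> simp [M2_pow, pd]

theorem M2_pow_two_mul_mulVec_pd (k : ℕ) : M2 ^ (2 * k) *ᵥ pd = ![-(2 * k : ℤ), 1] := by
  rw [M2_pow_mulVec_pd]
  ext i
  fin_cases i <;> simp [pow_succ, pow_mul]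

theorem M2_pow_two_mul_add_one_mulVec_pd (k : ℕ) :
    M2 ^ (2 * k + 1) *ᵥ pd = ![2 * (k : ℤ) + 1, -1] := by
  rw [M2_pow_mulVec_pd]
  ext i
  fin_cases i <;> simp [pow_succ, pow_mul]

theorem zd_eq_zero : zd = 0 := by
  ext i; fin_cases i <;> rfl

theorem val2_wordA (α β : ℕ) :
    val2 (wordA α β) = ∑ k ∈ range β, M2 ^ (2 * k) *ᵥ pd
      + ∑ k ∈ range α, M2 ^ (2 * (β + k) + 1) *ᵥ pd := by
  rw [val2]
  simp only [wordA]
  rw [Fin.sum_univ_eq_sum_range (fun i => M2 ^ i *ᵥ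
    if i < 2 * β then (if Even i then pd else zd) else (if Even (i - 2 * β) then zd else pd)),
    add_comm, sum_range_add, sum_range_two_mul, sum_range_two_mul]
  congr 1 <;> refine sum_congr rfl fun k hk => ?_
  · have hk : k < β := mem_range.mp hk
    simp only [show 2 * k < 2 * β by omega, show 2 * k + 1 < 2 * β by omega, ↓reduceIte,
      even_two_mul, Nat.not_even_two_mul_add_one, zd_eq_zero, mulVec_zero, add_zero]
  · simp only [show ¬2 * β + 2 * k < 2 * β by omega, show ¬2 * β + (2 * k + 1) < 2 * β by omega,
      Nat.add_sub_cancel_left, ↓reduceIte, even_two_mul, Nat.not_even_two_mul_add_one,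
      zd_eq_zero, mulVec_zero, zero_add, mul_add, add_assoc]

theorem sum_range_M2_pow_two_mul_mulVec_pd (β : ℕ) :
    ∑ k ∈ range β, M2 ^ (2 * k) *ᵥ pd = ![(β : ℤ) - β ^ 2, β] := by
  induction β with
  | zero => ext i; fin_cases i <;> simp
  | succ β ih =>
    rw [sum_range_succ, ih, M2_pow_two_mul_mulVec_pd]
    ext i; fin_cases i <;> simp; ring

theorem sum_range_M2_pow_odd_mulVec_pd (α β : ℕ) :
    ∑ k ∈ range α, M2 ^ (2 * (β + k) + 1) *ᵥ pd = ![(α : ℤ) ^ 2 + 2 * α * β, -(α : ℤ)] := by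
  induction α with
  | zero => ext i; fin_cases i <;> simp
  | succ α ih =>
    rw [sum_range_succ, ih, M2_pow_two_mul_add_one_mulVec_pd]
    ext i; fin_cases i <;> simp <;> ring

theorem stmt13 (α β : ℕ) :
    val2 (wordA α β)
      = ![(α : ℤ) ^ 2 + 2 * (α : ℤ) * (β : ℤ) - (β : ℤ) ^ 2 + (β : ℤ),
          (β : ℤ) - (α : ℤ)] := by
  rw [val2_wordA, sum_range_M2_pow_two_mul_mulVec_pd, sum_range_M2_pow_odd_mulVec_pd]
  ext i
  fin_cases i <;> simp <;> ring
end

section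
/- Let M be an n×n integer matrix similar to J_n(1) or J_n(-1) and D ⊂ Z^n finite. Then there exists a constant c > 0 such that for all k ≥ 1 and all words w = d_{k-1}...d_0 ∈ D^k, the sup-norm of [w]_M = sum_{i=0}^{k-1} M^i d_i satisfies ||[w]_M||_∞ ≤ c·k^n. Consequently, there exists γ > 0 such that any representation of a vector v ∈ Z^n has length at least γ·||v||_∞^{1/n}. -/
/-- The `n × n` Jordan block over `ℚ` with eigenvalue `a`: `a` on the diagonal, `1` on the
superdiagonal, `0` elsewhere. -/
def JordanQ (n : ℕ) (a : ℚ) : Matrix (Fin n) (Fin n) ℚ :=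
  Matrix.of fun i j => if j = i then a else if (j : ℕ) = (i : ℕ) + 1 then 1 else 0

/-- The sup-norm (maximal absolute value of a coordinate) of an integer vector. -/
def supNorm {n : ℕ} (v : Fin n → ℤ) : ℕ :=
  Finset.univ.sup fun j => (v j).natAbs

/-- The shift (nilpotent) part of the Jordan block. -/
def ShiftQ19 (n : ℕ) : Matrix (Fin n) (Fin n) ℚ :=
  Matrix.of fun i j => if (j : ℕ) = (i : ℕ) + 1 then 1 else 0

lemma shift_pow19 (n m : ℕ) :
    (ShiftQ19 n) ^ m = Matrix.of fun i j : Fin n => if (j : ℕ) = (i : ℕ) + m then 1 else 0 := by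
  induction m with
  | zero =>
    ext i j
    simp [Matrix.one_apply, Fin.ext_iff, eq_comm]
  | succ m ih =>
    ext i j
    rw [pow_succ, ih]
    simp only [Matrix.mul_apply, Matrix.of_apply, ShiftQ19]
    by_cases h : (i : ℕ) + m < n
    · rw [Finset.sum_eq_single (⟨(i : ℕ) + m, h⟩ : Fin n)]
      · simp [add_assoc]
      · intro x _ hx
        have : ¬ ((x : ℕ) = (i : ℕ) + m) := fun hc => hx (by apply Fin.ext; exact hc)
        simp [this]
      · simp
    · have h1 : ∀ x : Fin n, ¬ ((x : ℕ) = (i : ℕ) + m) := fun x hc => h (hc ▸ x.isLt)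
      have h2 : ¬ ((j : ℕ) = (i : ℕ) + (m + 1)) := by
        intro hc; exact h (by omega)
      simp [h1, h2]

lemma shift_pow_n19 (n : ℕ) : (ShiftQ19 n) ^ n = 0 := by
  rw [shift_pow19]
  ext i j
  have : ¬ ((j : ℕ) = (i : ℕ) + n) := by have := j.isLt; omega
  simp [this]

lemma jordan_sub19 (n : ℕ) (a : ℚ) :
    JordanQ n a - a • (1 : Matrix (Fin n) (Fin n) ℚ) = ShiftQ19 n := by
  ext i j
  by_cases h : j = i
  · subst h
    have : ¬ ((j : ℕ) = (j : ℕ) + 1) := by omega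
    simp [JordanQ, ShiftQ19, Matrix.one_apply, this]
  · have h' : ¬ (i = j) := fun hc => h hc.symm
    simp [JordanQ, ShiftQ19, Matrix.one_apply, h, h', Matrix.sub_apply]

lemma conj_pow19 {n : ℕ} (P X : Matrix (Fin n) (Fin n) ℚ) (h1 : P⁻¹ * P = 1)
    (h2 : P * P⁻¹ = 1) (m : ℕ) : (P⁻¹ * X * P) ^ m = P⁻¹ * X ^ m * P := by
  induction m with
  | zero => simp [h1]
  | succ m ih =>
    rw [pow_succ, ih, pow_succ]
    calc P⁻¹ * X ^ m * P * (P⁻¹ * X * P) = P⁻¹ * X ^ m * (P * P⁻¹) * X * P := by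
          simp only [Matrix.mul_assoc]
    _ = P⁻¹ * (X ^ m * X) * P := by rw [h2]; simp only [Matrix.mul_one, Matrix.mul_assoc]

lemma map_sub_smul19 {n : ℕ} (M : Matrix (Fin n) (Fin n) ℤ) (a : ℤ) :
    ((M - a • 1 : Matrix (Fin n) (Fin n) ℤ)).map (Int.cast : ℤ → ℚ)
      = M.map (Int.cast : ℤ → ℚ) - (a : ℚ) • 1 := by
  ext i j
  simp [Matrix.map_apply, Matrix.sub_apply, Matrix.smul_apply, Matrix.one_apply,
    apply_ite (Int.cast : ℤ → ℚ)]
  simp only [← Matrix.diagonal_intCast, Matrix.diagonal_apply]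
  split_ifs <;> simp

lemma expand19 {n : ℕ} (M : Matrix (Fin n) (Fin n) ℤ) (a : ℤ) (i : ℕ) :
    M ^ i = ∑ m ∈ Finset.range (i+1),
      ((i.choose m : ℤ) * a ^ (i - m)) • (M - a • 1) ^ m := by
  have hc : Commute (M - a • (1 : Matrix (Fin n) (Fin n) ℤ)) (a • 1) :=
    (Commute.one_right (M - a • 1)).smul_right a
  have hM : M = (M - a • 1) + a • 1 := by rw [sub_add_cancel]
  conv_lhs => rw [hM, hc.add_pow i]
  refine Finset.sum_congr rfl fun m _ => ?_
  rw [smul_pow, one_pow]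
  rw [Matrix.mul_smul, Matrix.mul_one]
  rw [show ((i.choose m : ℕ) : Matrix (Fin n) (Fin n) ℤ) = (i.choose m : ℤ) • 1 by
    simp [zsmul_eq_mul]]
  rw [Matrix.mul_smul, Matrix.mul_one, smul_smul, mul_comm]

theorem stmt19 (n : ℕ) (hn : 1 ≤ n) (M : Matrix (Fin n) (Fin n) ℤ)
    (hsim : ∃ P : Matrix (Fin n) (Fin n) ℚ, IsUnit P.det ∧
      (M.map (Int.cast : ℤ → ℚ) = P⁻¹ * JordanQ n 1 * P ∨
       M.map (Int.cast : ℤ → ℚ) = P⁻¹ * JordanQ n (-1) * P))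
    (D : Finset (Fin n → ℤ)) :
    (∃ c : ℝ, 0 < c ∧ ∀ k : ℕ, 1 ≤ k → ∀ d : Fin k → (Fin n → ℤ), (∀ i, d i ∈ D) →
        (supNorm (∑ i : Fin k, (M ^ (i : ℕ)).mulVec (d i)) : ℝ) ≤ c * (k : ℝ) ^ n) ∧
    (∃ γ : ℝ, 0 < γ ∧ ∀ (v : Fin n → ℤ) (k : ℕ) (d : Fin k → (Fin n → ℤ)),
        (∀ i, d i ∈ D) → (∑ i : Fin k, (M ^ (i : ℕ)).mulVec (d i)) = v →
        γ * (supNorm v : ℝ) ^ ((1 : ℝ) / n) ≤ (k : ℝ)) := by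
  obtain ⟨P, hdet, hJ⟩ := hsim
  have h1 : P⁻¹ * P = 1 := Matrix.nonsing_inv_mul P hdet
  have h2 : P * P⁻¹ = 1 := Matrix.mul_nonsing_inv P hdet
  obtain ⟨a, ha, hM⟩ : ∃ a : ℤ, (a = 1 ∨ a = -1) ∧
      M.map (Int.cast : ℤ → ℚ) = P⁻¹ * JordanQ n ((a : ℤ) : ℚ) * P := by
    rcases hJ with h | h
    · exact ⟨1, Or.inl rfl, by push_cast; exact h⟩
    · exact ⟨-1, Or.inr rfl, by push_cast; exact h⟩
  set N : Matrix (Fin n) (Fin n) ℤ := M - a • 1 with hN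
  -- nilpotency
  have hNmap : N.map (Int.cast : ℤ → ℚ) = P⁻¹ * ShiftQ19 n * P := by
    rw [hN, map_sub_smul19, hM, ← jordan_sub19]
    calc P⁻¹ * JordanQ n ((a : ℤ) : ℚ) * P - ((a : ℤ) : ℚ) • 1
        = P⁻¹ * JordanQ n ((a : ℤ) : ℚ) * P - ((a : ℤ) : ℚ) • (P⁻¹ * P) := by rw [h1]
      _ = P⁻¹ * (JordanQ n ((a : ℤ) : ℚ) - ((a : ℤ) : ℚ) • 1) * P := by
          rw [Matrix.mul_sub, Matrix.sub_mul]
          congr 1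
          rw [Matrix.mul_smul, Matrix.smul_mul, Matrix.mul_one]
  have hNn : N ^ n = 0 := by
    have hq : (N.map (Int.cast : ℤ → ℚ)) ^ n = 0 := by
      rw [hNmap, conj_pow19 P _ h1 h2, shift_pow_n19]
      simp
    have hq2 : (N ^ n).map (Int.cast : ℤ → ℚ) = 0 := by
      rw [show (N ^ n).map (Int.cast : ℤ → ℚ) = (N.map (Int.cast : ℤ → ℚ)) ^ n from by
        simpa using map_pow ((Int.castRingHom ℚ).mapMatrix) N n, hq]
    ext i j
    have := congrFun (congrFun hq2 i) j
    simpa [Matrix.map_apply] using this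
  have hNm : ∀ m, n ≤ m → N ^ m = 0 := by
    intro m hm
    rw [show m = n + (m - n) by omega, pow_add, hNn, zero_mul]
  have habs : ∀ j : ℕ, |a ^ j| = 1 := by
    rcases ha with h | h <;> subst h <;> intro j <;> simp [abs_pow]
  -- constants
  set C : ℕ := (Finset.range n).sup
    (fun m => Finset.univ.sup fun p : Fin n × Fin n => ((N ^ m) p.1 p.2).natAbs) with hCdef
  have hC : ∀ m, m < n → ∀ p q : Fin n, |(N ^ m) p q| ≤ (C : ℤ) := by
    intro m hm p q
    have h1' : ((N ^ m) p q).natAbs ≤ C := by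
      refine le_trans ?_ (Finset.le_sup (Finset.mem_range.mpr hm))
      exact Finset.le_sup (f := fun p : Fin n × Fin n => ((N ^ m) p.1 p.2).natAbs)
        (Finset.mem_univ (p, q))
    calc |(N ^ m) p q| = (((N ^ m) p q).natAbs : ℤ) := (Int.natCast_natAbs _).symm
      _ ≤ (C : ℤ) := by exact_mod_cast h1'
  set Dm : ℕ := D.sup supNorm with hDmdef
  have hD : ∀ v ∈ D, ∀ j : Fin n, |v j| ≤ (Dm : ℤ) := by
    intro v hv j
    have : (v j).natAbs ≤ Dm :=
      le_trans (Finset.le_sup (f := fun j => (v j).natAbs) (Finset.mem_univ j))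
        (Finset.le_sup (f := supNorm) hv)
    calc |v j| = ((v j).natAbs : ℤ) := (Int.natCast_natAbs _).symm
      _ ≤ (Dm : ℤ) := by exact_mod_cast this
  -- entry bound for powers of M
  have key1 : ∀ (k i : ℕ), i < k → ∀ p q : Fin n,
      |(M ^ i) p q| ≤ (n : ℤ) * ((C : ℤ) * (k : ℤ) ^ (n - 1)) := by
    intro k i hik p q
    have hk1 : 1 ≤ k := Nat.one_le_iff_ne_zero.mpr (by omega)
    rw [expand19 M a i]
    rw [Matrix.sum_apply]
    refine le_trans (Finset.abs_sum_le_sum_abs _ _) ?_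
    have hb : ∀ m ∈ Finset.range (i+1),
        |(((i.choose m : ℤ) * a ^ (i - m)) • N ^ m) p q|
          ≤ (if m < n then ((C : ℤ) * (k : ℤ) ^ (n - 1)) else 0) := by
      intro m _
      rw [Matrix.smul_apply, smul_eq_mul, abs_mul, abs_mul, habs, mul_one]
      by_cases hm : m < n
      · rw [if_pos hm]
        have hch : |(i.choose m : ℤ)| ≤ (k : ℤ) ^ (n - 1) := by
          rw [abs_of_nonneg (by positivity)]
          have : i.choose m ≤ k ^ (n - 1) := by
            calc i.choose m ≤ i ^ m := Nat.choose_le_pow i m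
              _ ≤ k ^ m := Nat.pow_le_pow_left (le_of_lt hik) m
              _ ≤ k ^ (n - 1) := Nat.pow_le_pow_right hk1 (by omega)
          exact_mod_cast this
        calc |(i.choose m : ℤ)| * |(N ^ m) p q| ≤ (k : ℤ) ^ (n - 1) * (C : ℤ) :=
              mul_le_mul hch (hC m hm p q) (abs_nonneg _) (by positivity)
          _ = (C : ℤ) * (k : ℤ) ^ (n - 1) := mul_comm _ _
      · rw [if_neg hm, hNm m (by omega)]
        simp
    refine le_trans (Finset.sum_le_sum hb) ?_
    rw [← Finset.sum_filter, Finset.sum_const]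
    have hcard : ((Finset.range (i+1)).filter (· < n)).card ≤ n := by
      calc ((Finset.range (i+1)).filter (· < n)).card ≤ (Finset.range n).card := by
            apply Finset.card_le_card
            intro x hx
            simp only [Finset.mem_filter, Finset.mem_range] at hx ⊢
            exact hx.2
        _ = n := Finset.card_range n
    rw [nsmul_eq_mul]
    exact mul_le_mul_of_nonneg_right (by exact_mod_cast hcard) (by positivity)
  -- natural-number constant
  set cN : ℕ := n * n * C * Dm + 1 with hcNdef
  have hcN : 0 < cN := Nat.succ_pos _
  -- main sup-norm bound
  have main : ∀ (k : ℕ), 1 ≤ k → ∀ d : Fin k → (Fin n → ℤ), (∀ i, d i ∈ D) →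
      (supNorm (∑ i : Fin k, (M ^ (i : ℕ)).mulVec (d i)) : ℤ) ≤ (cN : ℤ) * (k : ℤ) ^ n := by
    intro k hk d hd
    have hcoord : ∀ j : Fin n,
        |(∑ i : Fin k, (M ^ (i : ℕ)).mulVec (d i)) j| ≤ (cN : ℤ) * (k : ℤ) ^ n := by
      intro j
      rw [Finset.sum_apply]
      refine le_trans (Finset.abs_sum_le_sum_abs _ _) ?_
      have hterm : ∀ i : Fin k,
          |((M ^ (i : ℕ)).mulVec (d i)) j|
            ≤ (n : ℤ) * ((n : ℤ) * ((C : ℤ) * (k : ℤ) ^ (n - 1)) * (Dm : ℤ)) := by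
        intro i
        rw [Matrix.mulVec, dotProduct]
        refine le_trans (Finset.abs_sum_le_sum_abs _ _) ?_
        have hx : ∀ x : Fin n, |(M ^ (i : ℕ)) j x * d i x|
            ≤ (n : ℤ) * ((C : ℤ) * (k : ℤ) ^ (n - 1)) * (Dm : ℤ) := by
          intro x
          rw [abs_mul]
          exact mul_le_mul (key1 k i i.isLt j x) (hD _ (hd i) x) (abs_nonneg _)
            (by positivity)
        refine le_trans (Finset.sum_le_sum fun x _ => hx x) ?_
        rw [Finset.sum_const, Finset.card_univ, Fintype.card_fin, nsmul_eq_mul]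
      refine le_trans (Finset.sum_le_sum fun i _ => hterm i) ?_
      rw [Finset.sum_const, Finset.card_univ, Fintype.card_fin, nsmul_eq_mul]
      have hpow : (k : ℤ) * (k : ℤ) ^ (n - 1) = (k : ℤ) ^ n := by
        rw [← pow_succ']
        congr 1
        omega
      have : (k : ℤ) * ((n : ℤ) * ((n : ℤ) * ((C : ℤ) * (k : ℤ) ^ (n - 1)) * (Dm : ℤ)))
          = ((n * n * C * Dm : ℕ) : ℤ) * (k : ℤ) ^ n := by
        push_cast
        rw [← hpow]
        ring
      rw [this]
      have hle : ((n * n * C * Dm : ℕ) : ℤ) ≤ (cN : ℤ) := by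
        rw [hcNdef]; push_cast; omega
      exact mul_le_mul_of_nonneg_right hle (by positivity)
    rw [supNorm]
    have : ∀ j : Fin n, ((((∑ i : Fin k, (M ^ (i : ℕ)).mulVec (d i)) j).natAbs : ℤ))
        ≤ (cN : ℤ) * (k : ℤ) ^ n := by
      intro j
      rw [Int.natCast_natAbs]
      exact hcoord j
    have hsup : (Finset.univ.sup fun j => ((∑ i : Fin k, (M ^ (i : ℕ)).mulVec (d i)) j).natAbs)
        ≤ cN * k ^ n := by
      apply Finset.sup_le
      intro j _
      have := this j
      exact_mod_cast this
    exact_mod_cast hsup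
  constructor
  · refine ⟨cN, by exact_mod_cast hcN, ?_⟩
    intro k hk d hd
    have := main k hk d hd
    calc (supNorm (∑ i : Fin k, (M ^ (i : ℕ)).mulVec (d i)) : ℝ)
        ≤ ((cN : ℤ) * (k : ℤ) ^ n : ℤ) := by exact_mod_cast this
      _ = (cN : ℝ) * (k : ℝ) ^ n := by push_cast; ring
  · refine ⟨((cN : ℝ) ^ ((1 : ℝ) / n))⁻¹, ?_, ?_⟩
    · have : (0 : ℝ) < (cN : ℝ) ^ ((1 : ℝ) / n) :=
        Real.rpow_pos_of_pos (by exact_mod_cast hcN) _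
      positivity
    · intro v k d hd hv
      rcases Nat.eq_zero_or_pos k with hk0 | hkpos
      · subst hk0
        have hv0 : v = 0 := by rw [← hv]; simp
        have : supNorm v = 0 := by rw [hv0, supNorm]; simp
        rw [this]
        rw [Nat.cast_zero, Real.zero_rpow (by
          have : (n : ℝ) ≠ 0 := by exact_mod_cast Nat.one_le_iff_ne_zero.mp hn
          simp [this])]
        simp
      · have hbound := main k hkpos d (fun i => hd i)
        rw [hv] at hbound
        have hb : (supNorm v : ℝ) ≤ (cN : ℝ) * (k : ℝ) ^ n := by
          calc (supNorm v : ℝ) = (((supNorm v : ℤ)) : ℝ) := by push_cast; ring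
            _ ≤ (((cN : ℤ) * (k : ℤ) ^ n : ℤ) : ℝ) := by exact_mod_cast hbound
            _ = (cN : ℝ) * (k : ℝ) ^ n := by push_cast; ring
        have hnR : (0 : ℝ) < (n : ℝ) := by exact_mod_cast hn
        have hkR : (0 : ℝ) ≤ (k : ℝ) := Nat.cast_nonneg k
        have hcNR : (0 : ℝ) < (cN : ℝ) := by exact_mod_cast hcN
        have hrpow : (supNorm v : ℝ) ^ ((1 : ℝ) / n)
            ≤ (cN : ℝ) ^ ((1 : ℝ) / n) * (k : ℝ) := by
          have h1' : (supNorm v : ℝ) ^ ((1 : ℝ) / n)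
              ≤ ((cN : ℝ) * (k : ℝ) ^ n) ^ ((1 : ℝ) / n) :=
            Real.rpow_le_rpow (Nat.cast_nonneg _) hb (by positivity)
          refine le_trans h1' ?_
          rw [Real.mul_rpow (le_of_lt hcNR) (by positivity)]
          apply mul_le_mul_of_nonneg_left _ (le_of_lt (Real.rpow_pos_of_pos hcNR _))
          rw [← Real.rpow_natCast (k : ℝ) n, ← Real.rpow_mul hkR]
          rw [show (n : ℝ) * ((1 : ℝ) / n) = 1 by field_simp]
          rw [Real.rpow_one]
        rw [inv_mul_le_iff₀ (Real.rpow_pos_of_pos hcNR _)]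
        calc (supNorm v : ℝ) ^ ((1 : ℝ) / n) ≤ (cN : ℝ) ^ ((1 : ℝ) / n) * (k : ℝ) := hrpow
          _ = (cN : ℝ) ^ ((1 : ℝ) / n) * (k : ℝ) := rfl
end
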